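/- Let d ≥ 1, let I ⊂ ℤ^d∖{0} be a finite set, and let G ⊆ ℤ^d be the set of all ℤ-linear combinations of elements of I (the subgroup of ℤ^d generated by I). Then every element of H_∞(I) belongs to the ℝ-linear span of the family {c_m : m ∈ G} ∪ {s_m : m ∈ G} (note c_0 = 1). -/

import Mathlib

open Real MeasureTheory

/-- ⟨x, m⟩ = ∑ x_j m_j for x ∈ ℝ^d, m ∈ ℤ^d. -/
noncomputable def ip (d : ℕ) (x : Fin d → ℝ) (m : Fin d → ℤ) : ℝ :=
  ∑ j, x j * (m j : ℝ)

/-- Integer inner product on ℤ^d. -/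
def ipZ (d : ℕ) (m l : Fin d → ℤ) : ℤ := ∑ j, m j * l j

/-- c_m(x) = cos⟨x,m⟩. -/
noncomputable def cmap (d : ℕ) (m : Fin d → ℤ) : (Fin d → ℝ) → ℝ :=
  fun x => Real.cos (ip d x m)

/-- s_m(x) = sin⟨x,m⟩. -/
noncomputable def smap (d : ℕ) (m : Fin d → ℤ) : (Fin d → ℝ) → ℝ :=
  fun x => Real.sin (ip d x m)

/-- B(φ)(x) = ∑_j (∂_{x_j} φ(x))². -/
noncomputable def Bop (d : ℕ) (φ : (Fin d → ℝ) → ℝ) : (Fin d → ℝ) → ℝ :=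
  fun x => ∑ j, (fderiv ℝ φ x (Pi.single j 1)) ^ 2

/-- Functions representable as θ₀ − ∑_{j=1}^n B(θ_j) with θ's in H, n ≥ 1. -/
noncomputable def BRep (d : ℕ) (H : Set ((Fin d → ℝ) → ℝ)) : Set ((Fin d → ℝ) → ℝ) :=
  { f | ∃ n : ℕ, 1 ≤ n ∧ ∃ θ₀ ∈ H, ∃ θ : Fin n → (Fin d → ℝ) → ℝ,
      (∀ j, θ j ∈ H) ∧ f = θ₀ - ∑ j, Bop d (θ j) }

/-- F(H): f such that both f and −f are representable. -/
noncomputable def Fop (d : ℕ) (H : Set ((Fin d → ℝ) → ℝ)) : Set ((Fin d → ℝ) → ℝ) :=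
  { f | f ∈ BRep d H ∧ -f ∈ BRep d H }

/-- H(I): span of {1} ∪ {c_k, s_k : k ∈ I}. -/
noncomputable def H0 (d : ℕ) (I : Finset (Fin d → ℤ)) : Set ((Fin d → ℝ) → ℝ) :=
  ↑(Submodule.span ℝ
      ({fun _ => (1:ℝ)} ∪ ⋃ k ∈ (I : Set (Fin d → ℤ)), {cmap d k, smap d k}))

noncomputable def HSeq (d : ℕ) (I : Finset (Fin d → ℤ)) : ℕ → Set ((Fin d → ℝ) → ℝ)
  | 0 => H0 d I
  | j + 1 => Fop d (HSeq d I j)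

/-- H_∞(I) = ⋃_j H_j(I). -/
noncomputable def Hinf (d : ℕ) (I : Finset (Fin d → ℤ)) : Set ((Fin d → ℝ) → ℝ) :=
  ⋃ j, HSeq d I j

/-- I generates ℤ^d over ℤ. -/
def IsGenerator (d : ℕ) (I : Finset (Fin d → ℤ)) : Prop :=
  ∀ n : Fin d → ℤ, ∃ a : (Fin d → ℤ) → ℤ, n = ∑ k ∈ I, a k • k

/-- Connectedness condition of Proposition 2.5. -/
def ConnectedSet (d : ℕ) (I : Finset (Fin d → ℤ)) : Prop :=
  ∀ l ∈ I, ∀ m ∈ I, ∃ k : ℕ, ∃ n : Fin (k + 1) → (Fin d → ℤ),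
    (∀ j, n j ∈ I) ∧ ipZ d l (n 0) ≠ 0 ∧
    (∀ j : Fin k, ipZ d (n j.castSucc) (n j.succ) ≠ 0) ∧
    ipZ d (n (Fin.last k)) m ≠ 0

/-- (2πℤ^d)-periodicity for real-valued functions. -/
def Periodic2pi (d : ℕ) (f : (Fin d → ℝ) → ℝ) : Prop :=
  ∀ (x : Fin d → ℝ) (k : Fin d → ℤ), f (x + fun j => 2 * Real.pi * (k j : ℝ)) = f x

/-! The span `S` of `{c_m, s_m : m ∈ G}` over a subgroup `G ⊆ ℤ^d` is closed under products (by
the product-to-sum formulas, since `G` is closed under `±`) and under partial derivatives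
(`∂_j c_m = -m_j s_m`, `∂_j s_m = m_j c_m`). Hence `B` maps `S` into itself, so `F(H) ⊆ S`
whenever `H ⊆ S`. Since `H(I) ⊆ S` for `G` generated by `I`, induction gives `H_j(I) ⊆ S`. -/

section Trigonometric

variable {d : ℕ}

lemma ip_add (x : Fin d → ℝ) (m l : Fin d → ℤ) : ip d x (m + l) = ip d x m + ip d x l := by
  simp [ip, mul_add, Finset.sum_add_distrib]

lemma ip_sub (x : Fin d → ℝ) (m l : Fin d → ℤ) : ip d x (m - l) = ip d x m - ip d x l := by
  simp [ip, mul_sub, Finset.sum_sub_distrib]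

lemma cmap_zero : cmap d 0 = 1 := by
  funext x
  simp [cmap, ip]

lemma cmap_mul_cmap (m l : Fin d → ℤ) :
    cmap d m * cmap d l = (1 / 2 : ℝ) • cmap d (m - l) + (1 / 2 : ℝ) • cmap d (m + l) := by
  funext x
  simp only [Pi.mul_apply, Pi.add_apply, Pi.smul_apply, smul_eq_mul, cmap, ip_add, ip_sub,
    cos_add, cos_sub]
  ring

lemma smap_mul_smap (m l : Fin d → ℤ) :
    smap d m * smap d l = (1 / 2 : ℝ) • cmap d (m - l) - (1 / 2 : ℝ) • cmap d (m + l) := by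
  funext x
  simp only [Pi.mul_apply, Pi.sub_apply, Pi.smul_apply, smul_eq_mul, cmap, smap, ip_add, ip_sub,
    cos_add, cos_sub]
  ring

lemma smap_mul_cmap (m l : Fin d → ℤ) :
    smap d m * cmap d l = (1 / 2 : ℝ) • smap d (m + l) + (1 / 2 : ℝ) • smap d (m - l) := by
  funext x
  simp only [Pi.mul_apply, Pi.add_apply, Pi.smul_apply, smul_eq_mul, cmap, smap, ip_add, ip_sub,
    sin_add, sin_sub]
  ring

lemma cmap_mul_smap (m l : Fin d → ℤ) :
    cmap d m * smap d l = (1 / 2 : ℝ) • smap d (m + l) - (1 / 2 : ℝ) • smap d (m - l) := by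
  funext x
  simp only [Pi.mul_apply, Pi.sub_apply, Pi.smul_apply, smul_eq_mul, cmap, smap, ip_add, ip_sub,
    sin_add, sin_sub]
  ring

noncomputable def ipCLM (m : Fin d → ℤ) : (Fin d → ℝ) →L[ℝ] ℝ :=
  ∑ j, (m j : ℝ) • ContinuousLinearMap.proj j

lemma ipCLM_single (m : Fin d → ℤ) (j : Fin d) : ipCLM m (Pi.single j 1) = m j := by
  simp [ipCLM, Pi.single_apply]

lemma hasFDerivAt_ip (m : Fin d → ℤ) (x : Fin d → ℝ) :
    HasFDerivAt (fun y => ip d y m) (ipCLM m) x := by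
  have h : (fun y => ip d y m) = ipCLM m := by
    funext y
    simp [ipCLM, ip, mul_comm]
  exact h ▸ (ipCLM m).hasFDerivAt

lemma hasFDerivAt_cmap (m : Fin d → ℤ) (x : Fin d → ℝ) :
    HasFDerivAt (cmap d m) (-sin (ip d x m) • ipCLM m) x :=
  (hasDerivAt_cos _).comp_hasFDerivAt x (hasFDerivAt_ip m x)

lemma hasFDerivAt_smap (m : Fin d → ℤ) (x : Fin d → ℝ) :
    HasFDerivAt (smap d m) (cos (ip d x m) • ipCLM m) x :=
  (hasDerivAt_sin _).comp_hasFDerivAt x (hasFDerivAt_ip m x)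

noncomputable def partialDeriv (j : Fin d) (θ : (Fin d → ℝ) → ℝ) : (Fin d → ℝ) → ℝ :=
  fun x => fderiv ℝ θ x (Pi.single j 1)

lemma Bop_eq_sum_partialDeriv_mul_self (θ : (Fin d → ℝ) → ℝ) :
    Bop d θ = ∑ j, partialDeriv j θ * partialDeriv j θ := by
  funext x
  simp [Bop, partialDeriv, sq]

lemma partialDeriv_cmap (m : Fin d → ℤ) (j : Fin d) :
    partialDeriv j (cmap d m) = (-(m j : ℝ)) • smap d m := by
  funext x
  simp [partialDeriv, (hasFDerivAt_cmap m x).fderiv, ipCLM_single, smap, mul_comm]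

lemma partialDeriv_smap (m : Fin d → ℤ) (j : Fin d) :
    partialDeriv j (smap d m) = (m j : ℝ) • cmap d m := by
  funext x
  simp [partialDeriv, (hasFDerivAt_smap m x).fderiv, ipCLM_single, cmap, mul_comm]

lemma partialDeriv_add {f g : (Fin d → ℝ) → ℝ} (hf : Differentiable ℝ f)
    (hg : Differentiable ℝ g) (j : Fin d) :
    partialDeriv j (f + g) = partialDeriv j f + partialDeriv j g := by
  funext x
  simp [partialDeriv, fderiv_add (hf x) (hg x)]

lemma partialDeriv_smul (c : ℝ) (f : (Fin d → ℝ) → ℝ) (j : Fin d) :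
    partialDeriv j (c • f) = c • partialDeriv j f := by
  funext x
  simp [partialDeriv, fderiv_const_smul_field]

end Trigonometric

section TrigSpan

variable {d : ℕ} (G : AddSubgroup (Fin d → ℤ))

noncomputable def trigSpan : Submodule ℝ ((Fin d → ℝ) → ℝ) :=
  Submodule.span ℝ (⋃ m ∈ G, {cmap d m, smap d m})

variable {G}

lemma cmap_mem_trigSpan {m : Fin d → ℤ} (hm : m ∈ G) : cmap d m ∈ trigSpan G :=
  Submodule.subset_span (Set.mem_biUnion hm (by simp))

lemma smap_mem_trigSpan {m : Fin d → ℤ} (hm : m ∈ G) : smap d m ∈ trigSpan G :=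
  Submodule.subset_span (Set.mem_biUnion hm (by simp))

lemma one_mem_trigSpan : (1 : (Fin d → ℝ) → ℝ) ∈ trigSpan G :=
  cmap_zero (d := d) ▸ cmap_mem_trigSpan G.zero_mem

lemma mul_mem_trigSpan {f g : (Fin d → ℝ) → ℝ} (hf : f ∈ trigSpan G) (hg : g ∈ trigSpan G) :
    f * g ∈ trigSpan G := by
  suffices h : trigSpan G * trigSpan G ≤ trigSpan G from h (Submodule.mul_mem_mul hf hg)
  rw [trigSpan, Submodule.span_mul_span, Submodule.span_le]
  intro p hp
  obtain ⟨a, ha, b, hb, rfl⟩ := Set.mem_mul.mp hp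
  simp only [Set.mem_iUnion, Set.mem_insert_iff, Set.mem_singleton_iff] at ha hb
  obtain ⟨m, hm, ha⟩ := ha
  obtain ⟨l, hl, hb⟩ := hb
  have hc_sub := cmap_mem_trigSpan (G.sub_mem hm hl)
  have hc_add := cmap_mem_trigSpan (G.add_mem hm hl)
  have hs_sub := smap_mem_trigSpan (G.sub_mem hm hl)
  have hs_add := smap_mem_trigSpan (G.add_mem hm hl)
  rcases ha with rfl | rfl <;> rcases hb with rfl | rfl
  · rw [cmap_mul_cmap]
    exact add_mem (Submodule.smul_mem _ _ hc_sub) (Submodule.smul_mem _ _ hc_add)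
  · rw [cmap_mul_smap]
    exact sub_mem (Submodule.smul_mem _ _ hs_add) (Submodule.smul_mem _ _ hs_sub)
  · rw [smap_mul_cmap]
    exact add_mem (Submodule.smul_mem _ _ hs_add) (Submodule.smul_mem _ _ hs_sub)
  · rw [smap_mul_smap]
    exact sub_mem (Submodule.smul_mem _ _ hc_sub) (Submodule.smul_mem _ _ hc_add)

lemma differentiable_and_partialDeriv_mem_trigSpan {θ : (Fin d → ℝ) → ℝ}
    (hθ : θ ∈ trigSpan G) : Differentiable ℝ θ ∧ ∀ j, partialDeriv j θ ∈ trigSpan G := by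
  induction hθ using Submodule.span_induction with
  | mem f hf =>
    simp only [Set.mem_iUnion, Set.mem_insert_iff, Set.mem_singleton_iff] at hf
    obtain ⟨m, hm, rfl | rfl⟩ := hf
    · refine ⟨fun x => (hasFDerivAt_cmap m x).differentiableAt, fun j => ?_⟩
      rw [partialDeriv_cmap]
      exact Submodule.smul_mem _ _ (smap_mem_trigSpan hm)
    · refine ⟨fun x => (hasFDerivAt_smap m x).differentiableAt, fun j => ?_⟩
      rw [partialDeriv_smap]
      exact Submodule.smul_mem _ _ (cmap_mem_trigSpan hm)
  | zero =>
    refine ⟨differentiable_const 0, fun j => ?_⟩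
    convert (trigSpan G).zero_mem
    funext x
    simp [partialDeriv]
  | add f g _ _ hf hg =>
    refine ⟨hf.1.add hg.1, fun j => ?_⟩
    rw [partialDeriv_add hf.1 hg.1]
    exact add_mem (hf.2 j) (hg.2 j)
  | smul c f _ hf =>
    refine ⟨hf.1.const_smul c, fun j => ?_⟩
    rw [partialDeriv_smul]
    exact Submodule.smul_mem _ c (hf.2 j)

lemma Bop_mem_trigSpan {θ : (Fin d → ℝ) → ℝ} (hθ : θ ∈ trigSpan G) : Bop d θ ∈ trigSpan G := by
  obtain ⟨-, hderiv⟩ := differentiable_and_partialDeriv_mem_trigSpan hθ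
  rw [Bop_eq_sum_partialDeriv_mul_self]
  exact Submodule.sum_mem _ fun j _ => mul_mem_trigSpan (hderiv j) (hderiv j)

lemma H0_subset_trigSpan {I : Finset (Fin d → ℤ)} (hI : (I : Set (Fin d → ℤ)) ⊆ G) :
    H0 d I ⊆ trigSpan G := by
  refine Submodule.span_le.mpr (Set.union_subset ?_ ?_)
  · exact Set.singleton_subset_iff.mpr one_mem_trigSpan
  · simp only [Set.iUnion_subset_iff, Set.insert_subset_iff, Set.singleton_subset_iff]
    exact fun k hk => ⟨cmap_mem_trigSpan (hI hk), smap_mem_trigSpan (hI hk)⟩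

end TrigSpan

lemma BRep_subset {d : ℕ} {S : Submodule ℝ ((Fin d → ℝ) → ℝ)} (hB : ∀ θ ∈ S, Bop d θ ∈ S)
    {H : Set ((Fin d → ℝ) → ℝ)} (hH : H ⊆ S) : BRep d H ⊆ S := by
  rintro _ ⟨n, -, θ₀, hθ₀, θ, hθ, rfl⟩
  exact sub_mem (hH hθ₀) (Submodule.sum_mem _ fun j _ => hB _ (hH (hθ j)))

lemma Hinf_subset_trigSpan {d : ℕ} {G : AddSubgroup (Fin d → ℤ)} {I : Finset (Fin d → ℤ)}
    (hI : (I : Set (Fin d → ℤ)) ⊆ G) : Hinf d I ⊆ trigSpan G := by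
  refine Set.iUnion_subset fun j => ?_
  induction j with
  | zero => exact H0_subset_trigSpan hI
  | succ j ih => exact fun f hf => BRep_subset (fun _ => Bop_mem_trigSpan) ih hf.1

lemma setOf_eq_sum_smul_eq_span_int {d : ℕ} (I : Finset (Fin d → ℤ)) :
    {n : Fin d → ℤ | ∃ a : (Fin d → ℤ) → ℤ, n = ∑ k ∈ I, a k • k} =
      Submodule.span ℤ (I : Set (Fin d → ℤ)) := by
  ext n
  constructor
  · rintro ⟨a, rfl⟩
    exact Submodule.sum_mem _ fun k hk => Submodule.smul_mem _ _ (Submodule.subset_span hk)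
  · intro hn
    obtain ⟨a, -, ha⟩ := Submodule.mem_span_finset.mp hn
    exact ⟨a, ha.symm⟩

theorem stmt11_general (d : ℕ) (I : Finset (Fin d → ℤ)) :
    Hinf d I ⊆
      ↑(Submodule.span ℝ
        (⋃ m ∈ {n : Fin d → ℤ | ∃ a : (Fin d → ℤ) → ℤ, n = ∑ k ∈ I, a k • k},
          {cmap d m, smap d m})) := by
  rw [setOf_eq_sum_smul_eq_span_int]
  exact Hinf_subset_trigSpan (G := (Submodule.span ℤ (I : Set (Fin d → ℤ))).toAddSubgroup)
    Submodule.subset_span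

/-- every element of H_∞(I) lies in the ℝ-linear span of
{c_m, s_m : m in the subgroup of ℤ^d generated by I}. -/
theorem stmt11 (d : ℕ) (hd : 1 ≤ d) (I : Finset (Fin d → ℤ)) (hI : ∀ k ∈ I, k ≠ 0) :
    Hinf d I ⊆
      ↑(Submodule.span ℝ
        (⋃ m ∈ {n : Fin d → ℤ | ∃ a : (Fin d → ℤ) → ℤ, n = ∑ k ∈ I, a k • k},
          {cmap d m, smap d m})) :=
  stmt11_general d I
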